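/- arXiv:1311.6560 — 2 statements merged into one kernel-verified Lean document; each statement's English description precedes it below -/
import Mathlib

section
/- Let P be a poset with least element 0 and Z(P)^× ≠ ∅. Then the diameter of the reduced zero-divisor graph Γ_E(P) equals 3 if and only if the diameter of the zero-divisor graph Γ(P) equals 3. -/
/-- `L(x,y) = {z : z ≤ x ∧ z ≤ y}`, where the least element `0` of the poset is `⊥`. -/
def LSet (P : Type*) [PartialOrder P] [OrderBot P] (x y : P) : Set P := {z | z ≤ x ∧ z ≤ y}

theorem LSet_comm (P : Type*) [PartialOrder P] [OrderBot P] (x y : P) :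
    LSet P x y = LSet P y x := by
  ext z; exact ⟨fun h => ⟨h.2, h.1⟩, fun h => ⟨h.2, h.1⟩⟩

/-- The annihilator of `x`: `ann(x) = {y : L(x,y) = {0}}`. -/
def ann (P : Type*) [PartialOrder P] [OrderBot P] (x : P) : Set P := {y | LSet P x y = {⊥}}

theorem mem_ann_comm (P : Type*) [PartialOrder P] [OrderBot P] (x y : P) :
    y ∈ ann P x ↔ x ∈ ann P y := by
  simp only [ann, Set.mem_setOf_eq, LSet_comm P x y]

/-- The set `Z(P)^× = Z(P) \ {0}` of nonzero zero-divisors of `P`. -/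
def ZDivX (P : Type*) [PartialOrder P] [OrderBot P] : Set P :=
  {x | x ≠ ⊥ ∧ ∃ y : P, y ≠ ⊥ ∧ LSet P x y = {⊥}}

/-- The zero-divisor graph `Γ(P)` on `Z(P)^×`. -/
def zdGraph (P : Type*) [PartialOrder P] [OrderBot P] : SimpleGraph (ZDivX P) where
  Adj a b := (a : P) ≠ (b : P) ∧ LSet P a b = {⊥}
  symm := by
    refine ⟨?_⟩
    rintro a b ⟨h1, h2⟩
    exact ⟨fun h => h1 h.symm, by rw [LSet_comm]; exact h2⟩
  loopless := by refine ⟨?_⟩; rintro a ⟨h1, _⟩; exact h1 rfl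

/-- The equivalence `x ∼ y ↔ ann(x) = ann(y)` on `Z(P)^×`. -/
def annSetoid (P : Type*) [PartialOrder P] [OrderBot P] : Setoid (ZDivX P) where
  r a b := ann P a = ann P b
  iseqv := ⟨fun _ => rfl, Eq.symm, Eq.trans⟩

/-- The reduced zero-divisor graph `Γ_E(P)`, on equivalence classes of `Z(P)^×`. -/
def redGraph (P : Type*) [PartialOrder P] [OrderBot P] :
    SimpleGraph (Quotient (annSetoid P)) where
  Adj := Quotient.lift₂ (fun a b => LSet P (a : P) (b : P) = {⊥}) (by
    intro a b a' b' ha hb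
    have ha' : ann P (a : P) = ann P (a' : P) := ha
    have hb' : ann P (b : P) = ann P (b' : P) := hb
    apply propext
    constructor
    · intro h
      have h1 : (b : P) ∈ ann P (a : P) := h
      rw [ha', mem_ann_comm, hb', mem_ann_comm] at h1
      exact h1
    · intro h
      have h1 : (b' : P) ∈ ann P (a' : P) := h
      rw [← ha', mem_ann_comm, ← hb', mem_ann_comm] at h1
      exact h1)
  symm := by
    refine ⟨?_⟩
    intro x y
    refine Quotient.inductionOn₂ x y ?_
    intro a b h
    have h' : LSet P (a : P) (b : P) = {⊥} := h
    show LSet P (b : P) (a : P) = {⊥}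
    rw [LSet_comm]; exact h'
  loopless := by
    refine ⟨?_⟩
    intro x
    refine Quotient.inductionOn x ?_
    intro a h
    have h' : LSet P (a : P) (a : P) = {⊥} := h
    have hm : (a : P) ∈ LSet P (a : P) (a : P) := ⟨le_refl _, le_refl _⟩
    rw [h'] at hm
    exact a.2.1 hm

/-!
Identifying elements with equal annihilators never increases distances, so
`diam Γ_E(P) ≤ diam Γ(P)`. Conversely, adjacency in `Γ_E(P)` only depends on the classes, so
any choice of representatives is a graph homomorphism `Γ_E(P) → Γ(P)`; choosing `a` and `b`
as the representatives of their (distinct) classes shows that their distance in `Γ(P)` is at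
most that of their classes. Two elements with the same annihilator are at distance at most `2`
in `Γ(P)`, through any element annihilating both. Hence `diam Γ(P) ≤ max (diam Γ_E(P)) 2`, and
neither diameter can be `3` without the other.
-/

namespace SimpleGraph

variable {V W : Type*} {G : SimpleGraph V} {G' : SimpleGraph W}

theorem Hom.edist_le (f : G →g G') (u v : V) : G'.edist (f u) (f v) ≤ G.edist u v :=
  le_iInf fun p => (SimpleGraph.edist_le (p.map f)).trans_eq (by rw [Walk.length_map])

theorem ediam_le_of_hom_surjective (f : G →g G') (hf : Function.Surjective f) :
    G'.ediam ≤ G.ediam := by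
  refine ediam_le_of_edist_le fun x y => ?_
  obtain ⟨u, rfl⟩ := hf x
  obtain ⟨v, rfl⟩ := hf y
  exact (f.edist_le u v).trans edist_le_ediam

end SimpleGraph

open SimpleGraph

section ZeroDivisorGraph

variable {P : Type*} [PartialOrder P] [OrderBot P]

theorem zdGraph_adj_of_LSet_eq {a b : ZDivX P} (h : LSet P a b = {⊥}) : (zdGraph P).Adj a b := by
  refine ⟨fun hab => a.2.1 ?_, h⟩
  have ha : (a : P) ∈ LSet P a b := ⟨le_rfl, hab.le⟩
  rwa [h] at ha

theorem redGraph_adj_mk {a b : ZDivX P} :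
    (redGraph P).Adj (Quotient.mk _ a) (Quotient.mk _ b) ↔ LSet P a b = {⊥} :=
  Iff.rfl

def annQuotientHom : zdGraph P →g redGraph P where
  toFun := Quotient.mk (annSetoid P)
  map_rel' h := redGraph_adj_mk.2 h.2

def homOfSection (s : Quotient (annSetoid P) → ZDivX P)
    (hs : ∀ c, Quotient.mk _ (s c) = c) : redGraph P →g zdGraph P where
  toFun := s
  map_rel' {c d} h := by
    rw [← hs c, ← hs d, redGraph_adj_mk] at h
    exact zdGraph_adj_of_LSet_eq h

theorem zdGraph_edist_le_two_of_ann_eq {a b : ZDivX P} (h : ann P a = ann P b) :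
    (zdGraph P).edist a b ≤ 2 := by
  obtain ⟨y, hy, hay⟩ := a.2.2
  have hyb : LSet P y b = {⊥} := (mem_ann_comm P _ _).1 (h ▸ hay : y ∈ ann P b)
  let y' : ZDivX P := ⟨y, hy, a, a.2.1, by rwa [LSet_comm]⟩
  let path : (zdGraph P).Walk a b :=
    .cons (zdGraph_adj_of_LSet_eq (b := y') hay) (.cons (zdGraph_adj_of_LSet_eq hyb) .nil)
  exact (edist_le path).trans_eq (by simp [path])

theorem zdGraph_edist_le_redGraph_edist {a b : ZDivX P}
    (hab : Quotient.mk (annSetoid P) a ≠ Quotient.mk _ b) :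
    (zdGraph P).edist a b ≤ (redGraph P).edist (Quotient.mk _ a) (Quotient.mk _ b) := by
  classical
  let s : Quotient (annSetoid P) → ZDivX P :=
    Function.update (Function.update Quotient.out (Quotient.mk _ a) a) (Quotient.mk _ b) b
  have hs : ∀ c, Quotient.mk _ (s c) = c := by
    intro c
    by_cases hcb : c = Quotient.mk _ b
    · simp [s, hcb]
    by_cases hca : c = Quotient.mk _ a
    · subst hca
      simp [s, hcb]
    simp [s, hca, hcb]
  have hsa : s (Quotient.mk _ a) = a := by simp [s, hab]
  have hsb : s (Quotient.mk _ b) = b := by simp [s]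
  simpa only [homOfSection, RelHom.coeFn_mk, hsa, hsb] using
    (homOfSection s hs).edist_le (Quotient.mk _ a) (Quotient.mk _ b)

theorem redGraph_ediam_le_zdGraph_ediam : (redGraph P).ediam ≤ (zdGraph P).ediam :=
  ediam_le_of_hom_surjective annQuotientHom Quotient.mk_surjective

theorem zdGraph_ediam_le_max : (zdGraph P).ediam ≤ max (redGraph P).ediam 2 := by
  refine ediam_le_of_edist_le fun a b => ?_
  by_cases hab : Quotient.mk (annSetoid P) a = Quotient.mk _ b
  · exact le_max_of_le_right (zdGraph_edist_le_two_of_ann_eq (Quotient.exact hab))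
  · exact le_max_of_le_left ((zdGraph_edist_le_redGraph_edist hab).trans edist_le_ediam)

end ZeroDivisorGraph

theorem stmt1_general (P : Type*) [PartialOrder P] [OrderBot P] :
    (redGraph P).ediam = 3 ↔ (zdGraph P).ediam = 3 := by
  have hred := redGraph_ediam_le_zdGraph_ediam (P := P)
  have hzd := zdGraph_ediam_le_max (P := P)
  constructor
  · intro h
    rw [h] at hred hzd
    exact le_antisymm (hzd.trans (max_le le_rfl (by norm_num))) hred
  · intro h
    rw [h] at hred hzd
    exact le_antisymm hred ((le_max_iff.1 hzd).resolve_right (by norm_num))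

/-- `diam Γ_E(P) = 3` if and only if `diam Γ(P) = 3`. -/
theorem stmt1 (P : Type*) [PartialOrder P] [OrderBot P] (hZ : (ZDivX P).Nonempty) :
    (redGraph P).ediam = 3 ↔ (zdGraph P).ediam = 3 :=
  stmt1_general P
end

section
/- Let P be a poset with least element 0 and Z(P)^× ≠ ∅ such that the reduced zero-divisor graph Γ_E(P) has finitely many vertices. Then every vertex of maximal degree in Γ_E(P) is an annihilator prime ideal of P; that is, if x ∈ Z(P)^× satisfies deg([x]) ≥ deg([y]) for all vertices [y] of Γ_E(P), then ann(x) is an annihilator prime ideal of P (equivalently, a maximal element of 𝔄 := {ann(w) : w ∈ P\{0}} under inclusion). -/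
/-- `I` is an ideal of the poset `P`: a nonempty downward-closed subset. -/
def IsIdeal (P : Type*) [PartialOrder P] [OrderBot P] (I : Set P) : Prop :=
  I.Nonempty ∧ ∀ x ∈ I, ∀ y : P, y ≤ x → y ∈ I

/-- `I` is a prime ideal of the poset `P`: a proper ideal such that
`L(x,y) ⊆ I` implies `x ∈ I` or `y ∈ I`. -/
def IsPrimeIdeal (P : Type*) [PartialOrder P] [OrderBot P] (I : Set P) : Prop :=
  IsIdeal P I ∧ I ≠ Set.univ ∧ ∀ x y : P, LSet P x y ⊆ I → x ∈ I ∨ y ∈ I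

/-- The family `𝔄 = {ann(x) : x ∈ P \ {0}}`. -/
def AnnFam (P : Type*) [PartialOrder P] [OrderBot P] : Set (Set P) :=
  {I | ∃ x : P, x ≠ ⊥ ∧ ann P x = I}

/-- `Ann(P)`, the set of annihilator prime ideals of `P`. -/
def AnnPrimes (P : Type*) [PartialOrder P] [OrderBot P] : Set (Set P) :=
  {I | IsPrimeIdeal P I ∧ ∃ x : P, ann P x = I}

/-- `P` satisfies the ACC for annihilators: every nonempty subfamily of `𝔄` has a
maximal element. -/
def ACCAnn (P : Type*) [PartialOrder P] [OrderBot P] : Prop :=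
  ∀ S : Set (Set P), S ⊆ AnnFam P → S.Nonempty → ∃ I ∈ S, ∀ J ∈ S, I ⊆ J → I = J


/-!
If `ann(x) ⊊ ann(w)` with `w ≠ 0`, then `w` is again a nonzero zero-divisor and every
neighbour of `[x]` in `Γ_E(P)` is a neighbour of `[w]`, while an element of
`ann(w) \ ann(x)` gives one more; with finitely many vertices this raises the degree, so a
vertex of maximal degree has a maximal annihilator. A maximal annihilator `ann(x)` is prime:
if `a ∉ ann(x)`, some `0 ≠ c ≤ x, a` has `ann(c) = ann(x)`, and `L(a, b) ⊆ ann(x)` then forces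
`b ∈ ann(c)`.
-/

section

variable {P : Type*} [PartialOrder P] [OrderBot P]

lemma mem_ann_iff {x y : P} : y ∈ ann P x ↔ ∀ z, z ≤ x → z ≤ y → z = ⊥ := by
  refine ⟨fun h z hx hy => ?_, fun h => ?_⟩
  · have hz : z ∈ LSet P x y := ⟨hx, hy⟩
    rwa [h] at hz
  · ext z
    exact ⟨fun hz => h z hz.1 hz.2, fun hz => hz ▸ ⟨bot_le, bot_le⟩⟩

lemma bot_mem_ann (x : P) : ⊥ ∈ ann P x :=
  mem_ann_iff.2 fun _ _ hz => le_bot_iff.1 hz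

lemma ann_antitone : Antitone (ann P) := fun _ _ hyx _ hz =>
  mem_ann_iff.2 fun w hw hwz => mem_ann_iff.1 hz w (hw.trans hyx) hwz

lemma eq_bot_of_mem_ann_of_le {x z : P} (hz : z ∈ ann P x) (hzx : z ≤ x) : z = ⊥ :=
  mem_ann_iff.1 hz z hzx le_rfl

lemma not_mem_ann_self {x : P} (hx : x ≠ ⊥) : x ∉ ann P x :=
  fun h => hx (eq_bot_of_mem_ann_of_le h le_rfl)

lemma mk_mem_redGraph_neighborSet_iff (a b : ZDivX P) :
    Quotient.mk (annSetoid P) b ∈ (redGraph P).neighborSet (Quotient.mk (annSetoid P) a) ↔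
      (b : P) ∈ ann P a :=
  Iff.rfl

lemma redGraph_neighborSet_mono {a b : ZDivX P} (h : ann P (a : P) ⊆ ann P (b : P)) :
    (redGraph P).neighborSet (Quotient.mk (annSetoid P) a) ⊆
      (redGraph P).neighborSet (Quotient.mk (annSetoid P) b) := by
  rintro ⟨c⟩ hc
  exact h hc

lemma ann_maximal_of_neighborSet_ncard_maximal [Finite (Quotient (annSetoid P))]
    (x : ZDivX P)
    (hmax : ∀ y : ZDivX P,
      ((redGraph P).neighborSet (Quotient.mk (annSetoid P) y)).ncard ≤
        ((redGraph P).neighborSet (Quotient.mk (annSetoid P) x)).ncard) :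
    ∀ J ∈ AnnFam P, ann P (x : P) ⊆ J → ann P (x : P) = J := by
  rintro J ⟨w, hw, rfl⟩ hsub
  by_contra hne
  obtain ⟨u, huw, hux⟩ := Set.exists_of_ssubset (hsub.ssubset_of_ne hne)
  obtain ⟨hx, y, hy, hxy⟩ := x.2
  have hu : u ≠ ⊥ := fun h => hux (h ▸ bot_mem_ann _)
  let W : ZDivX P := ⟨w, hw, y, hy, hsub hxy⟩
  let U : ZDivX P := ⟨u, hu, w, hw, (mem_ann_comm P w u).1 huw⟩
  have hssub : (redGraph P).neighborSet (Quotient.mk (annSetoid P) x) ⊂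
      (redGraph P).neighborSet (Quotient.mk (annSetoid P) W) :=
    Set.ssubset_iff_exists.2 ⟨redGraph_neighborSet_mono (b := W) hsub, _,
      (mk_mem_redGraph_neighborSet_iff W U).2 huw,
      fun h => hux ((mk_mem_redGraph_neighborSet_iff x U).1 h)⟩
  exact (Set.ncard_lt_ncard hssub (Set.toFinite _)).not_ge (hmax W)

lemma isPrimeIdeal_ann_of_maximal {x : P} (hx : x ≠ ⊥)
    (hmax : ∀ J ∈ AnnFam P, ann P x ⊆ J → ann P x = J) :
    IsPrimeIdeal P (ann P x) := by
  refine ⟨⟨⟨⊥, bot_mem_ann x⟩, fun a ha b hba => ?_⟩,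
    fun h => not_mem_ann_self hx (h ▸ Set.mem_univ x), fun a b hab => ?_⟩
  · exact (mem_ann_comm P x b).2 (ann_antitone hba ((mem_ann_comm P x a).1 ha))
  by_cases ha : a ∈ ann P x
  · exact Or.inl ha
  obtain ⟨c, hcx, hca, hc⟩ : ∃ c, c ≤ x ∧ c ≤ a ∧ c ≠ ⊥ := by
    simpa [mem_ann_iff] using ha
  have hcann : ann P x = ann P c := hmax _ ⟨c, hc, rfl⟩ (ann_antitone hcx)
  refine Or.inr (hcann ▸ mem_ann_iff.2 fun z hzc hzb => ?_)
  exact eq_bot_of_mem_ann_of_le (hab ⟨hzc.trans hca, hzb⟩) (hzc.trans hcx)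

end

theorem stmt18_general (P : Type*) [PartialOrder P] [OrderBot P]
    (hfin : Finite (Quotient (annSetoid P))) (x : ZDivX P)
    (hmax : ∀ y : ZDivX P,
      ((redGraph P).neighborSet (Quotient.mk (annSetoid P) y)).ncard ≤
        ((redGraph P).neighborSet (Quotient.mk (annSetoid P) x)).ncard) :
    IsPrimeIdeal P (ann P (x : P)) ∧
      ∀ J ∈ AnnFam P, ann P (x : P) ⊆ J → ann P (x : P) = J := by
  have hann := ann_maximal_of_neighborSet_ncard_maximal x hmax
  exact ⟨isPrimeIdeal_ann_of_maximal x.2.1 hann, hann⟩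

/-- If `Γ_E(P)` has finitely many vertices, then every vertex of maximal degree in
`Γ_E(P)` is an annihilator prime ideal, i.e. a maximal element of `𝔄`. -/
theorem stmt18 (P : Type*) [PartialOrder P] [OrderBot P] (hZ : (ZDivX P).Nonempty)
    (hfin : Finite (Quotient (annSetoid P))) (x : ZDivX P)
    (hmax : ∀ y : ZDivX P,
      ((redGraph P).neighborSet (Quotient.mk (annSetoid P) y)).ncard ≤
        ((redGraph P).neighborSet (Quotient.mk (annSetoid P) x)).ncard) :
    IsPrimeIdeal P (ann P (x : P)) ∧
      ∀ J ∈ AnnFam P, ann P (x : P) ⊆ J → ann P (x : P) = J :=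
  stmt18_general P hfin x hmax
end
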